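/- Let f be a non-constant tropical meromorphic function and let a ∈ R satisfy a ≤ f(x) for all x ∈ R. Then T(r, f) ≤ N(r, −max{f, a}) + max{−a, 0} + f(0) for all r ≥ 0; in particular T(r,f) = N(r, −(f ⊕ a)) + O(1) as r → ∞. -/

import Mathlib

/-!
The heart of the matter is the tropical Jensen formula `T(r, f) = T(r, -f) + f(0)`. The poles
of `-f` are the roots of `f`, so `n(t, -f) - n(t, f)` is the total jump `Σ_{|s| ≤ t} ω_f(s)` of
the slope of `f` over `[-t, t]`; as the jumps are isolated this telescopes to
`f'₊(t) - f'₋(-t)`, the right derivative of `f(t) + f(-t)`. Integrating over `[0, r]` gives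
`N(r, -f) - N(r, f) = (f(r) + f(-r))/2 - f(0)`, while `m(r, f) - m(r, -f) = (f(r) + f(-r))/2`.
Finally `max{f, a} = f` and `m(r, -f) ≤ max{-a, 0}` because `a ≤ f`.
-/

open Set Filter

/-- A tropical meromorphic function: a continuous piecewise linear real function, i.e.
a continuous function that is affine on a one-sided neighbourhood of every point. -/
def TropMero (f : ℝ → ℝ) : Prop :=
  Continuous f ∧ ∀ x : ℝ, ∃ ε > (0 : ℝ),
    (∃ a b : ℝ, ∀ y ∈ Set.Ico x (x + ε), f y = a * y + b) ∧
    (∃ a b : ℝ, ∀ y ∈ Set.Ioc (x - ε) x, f y = a * y + b)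

/-- `ω_f(x)`: the jump of the derivative of `f` at `x` (right slope minus left slope).
`x` is a root of `f` if `ω_f(x) > 0` and a pole if `ω_f(x) < 0`. -/
noncomputable def omega (f : ℝ → ℝ) (x : ℝ) : ℝ :=
  derivWithin f (Set.Ici x) x - derivWithin f (Set.Iic x) x

/-- A tropical entire function: a tropical meromorphic function without poles,
equivalently a convex one. -/
def TropEntire (f : ℝ → ℝ) : Prop := TropMero f ∧ ConvexOn ℝ Set.univ f

/-- The tropical proximity function `m(r, f) = (f⁺(r) + f⁺(-r))/2`. -/
noncomputable def mProx (f : ℝ → ℝ) (r : ℝ) : ℝ := (max (f r) 0 + max (f (-r)) 0) / 2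

/-- The unintegrated counting function `n(t, f) = Σ_{|s| ≤ t, ω_f(s) < 0} |ω_f(s)|`. -/
noncomputable def nCount (f : ℝ → ℝ) (t : ℝ) : ℝ :=
  ∑ᶠ s ∈ {s : ℝ | |s| ≤ t ∧ omega f s < 0}, |omega f s|

/-- The tropical counting function `N(r, f) = (1/2) ∫₀^r n(t, f) dt`. -/
noncomputable def NCount (f : ℝ → ℝ) (r : ℝ) : ℝ := (1 / 2) * ∫ t in (0 : ℝ)..r, nCount f t

/-- The tropical Nevanlinna characteristic `T(r, f) = m(r, f) + N(r, f)`. -/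
noncomputable def Tchar (f : ℝ → ℝ) (r : ℝ) : ℝ := mProx f r + NCount f r

open Topology Function

noncomputable def rightDeriv (f : ℝ → ℝ) (x : ℝ) : ℝ := derivWithin f (Ici x) x

noncomputable def leftDeriv (f : ℝ → ℝ) (x : ℝ) : ℝ := derivWithin f (Iic x) x

lemma omega_eq_rightDeriv_sub_leftDeriv (f : ℝ → ℝ) (x : ℝ) :
    omega f x = rightDeriv f x - leftDeriv f x := rfl

section Slopes

variable {f : ℝ → ℝ}

lemma HasDerivWithinAt.rightDeriv_eq {c x : ℝ} (h : HasDerivWithinAt f c (Ici x) x) :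
    rightDeriv f x = c :=
  h.derivWithin (uniqueDiffOn_Ici x x self_mem_Ici)

lemma HasDerivWithinAt.leftDeriv_eq {c x : ℝ} (h : HasDerivWithinAt f c (Iic x) x) :
    leftDeriv f x = c :=
  h.derivWithin (uniqueDiffOn_Iic x x self_mem_Iic)

lemma HasDerivAt.omega_eq_zero {c x : ℝ} (h : HasDerivAt f c x) : omega f x = 0 := by
  rw [omega_eq_rightDeriv_sub_leftDeriv, h.hasDerivWithinAt.rightDeriv_eq,
    h.hasDerivWithinAt.leftDeriv_eq, sub_self]

lemma hasDerivWithinAt_of_eqOn_affine {s t : Set ℝ} {a b x : ℝ} (hs : s ∈ 𝓝[t] x) (hx : x ∈ s)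
    (h : ∀ y ∈ s, f y = a * y + b) : HasDerivWithinAt f a t x := by
  have hline : HasDerivAt (fun y => a * y + b) a x := by
    simpa using ((hasDerivAt_id x).const_mul a).add_const b
  exact hline.hasDerivWithinAt.congr_of_eventuallyEq (eventually_of_mem hs h) (h x hx)

end Slopes

lemma eq_of_eventually_eq_nhdsLT_nhdsGT {g : ℝ → ℝ} {u v : ℝ} (huv : u ≤ v)
    (hlt : ∀ x ∈ Icc u v, ∀ᶠ y in 𝓝[<] x, g y = g x)
    (hgt : ∀ x ∈ Icc u v, ∀ᶠ y in 𝓝[>] x, g y = g x) : g v = g u := by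
  have hloc : ∀ x ∈ Icc u v, g =ᶠ[𝓝 x] fun _ => g x := fun x hx => by
    rw [← nhdsNE_sup_pure, ← nhdsLT_sup_nhdsGT]
    simp only [EventuallyEq, eventually_sup, eventually_pure]
    exact ⟨⟨hlt x hx, hgt x hx⟩, trivial⟩
  refine constant_of_has_deriv_right_zero
    (fun x hx => (continuousAt_const.congr (hloc x hx).symm).continuousWithinAt)
    (fun x hx => ((hasDerivAt_const x (g x)).congr_of_eventuallyEq
      (hloc x (Ico_subset_Icc_self hx))).hasDerivWithinAt) v ⟨huv, le_rfl⟩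

lemma mProx_nonneg (g : ℝ → ℝ) (r : ℝ) : 0 ≤ mProx g r := by
  unfold mProx
  positivity

lemma mProx_le_max {g : ℝ → ℝ} {c : ℝ} (h : ∀ x, g x ≤ c) (r : ℝ) : mProx g r ≤ max c 0 := by
  unfold mProx
  linarith [max_le_max_right 0 (h r), max_le_max_right 0 (h (-r))]

lemma mProx_sub_mProx_neg (g : ℝ → ℝ) (r : ℝ) :
    mProx g r - mProx (fun x => -g x) r = (g r + g (-r)) / 2 := by
  unfold mProx
  linarith [max_zero_sub_max_neg_zero_eq_self (g r), max_zero_sub_max_neg_zero_eq_self (g (-r))]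

lemma nCount_eq_finsum_negPart (g : ℝ → ℝ) (t : ℝ) :
    nCount g t = ∑ᶠ s ∈ Icc (-t) t, (omega g s)⁻ := by
  rw [nCount, finsum_mem_def, finsum_mem_def]
  congr 1 with s
  by_cases hs : |s| ≤ t
  · have hs' : s ∈ Icc (-t) t := abs_le.mp hs
    rcases lt_or_ge (omega g s) 0 with hω | hω
    · simp [indicator, hs, hs', hω, negPart_eq_neg.mpr hω.le, abs_of_neg hω]
    · simp [indicator, hs, hs', hω.not_gt, negPart_of_nonneg hω]
  · have hs' : s ∉ Icc (-t) t := fun h => hs (abs_le.mpr h)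
    simp [indicator, hs, hs']

namespace TropMero

variable {f : ℝ → ℝ}

lemma exists_hasDerivWithinAt_Ici (hf : TropMero f) (x : ℝ) :
    ∃ c, HasDerivWithinAt f c (Ici x) x ∧ ∀ᶠ y in 𝓝[>] x, HasDerivAt f c y := by
  obtain ⟨ε, hε, ⟨a, b, h⟩, -⟩ := hf.2 x
  refine ⟨a, hasDerivWithinAt_of_eqOn_affine (Ico_mem_nhdsGE (by linarith))
    ⟨le_rfl, by linarith⟩ h, ?_⟩
  filter_upwards [Ioo_mem_nhdsGT (show x < x + ε by linarith)] with y hy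
  exact hasDerivWithinAt_univ.mp <| hasDerivWithinAt_of_eqOn_affine
    (nhdsWithin_univ y ▸ Ioo_mem_nhds hy.1 hy.2) hy fun z hz => h z (Ioo_subset_Ico_self hz)

lemma exists_hasDerivWithinAt_Iic (hf : TropMero f) (x : ℝ) :
    ∃ c, HasDerivWithinAt f c (Iic x) x ∧ ∀ᶠ y in 𝓝[<] x, HasDerivAt f c y := by
  obtain ⟨ε, hε, -, ⟨a, b, h⟩⟩ := hf.2 x
  refine ⟨a, hasDerivWithinAt_of_eqOn_affine (Ioc_mem_nhdsLE (by linarith))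
    ⟨by linarith, le_rfl⟩ h, ?_⟩
  filter_upwards [Ioo_mem_nhdsLT (show x - ε < x by linarith)] with y hy
  exact hasDerivWithinAt_univ.mp <| hasDerivWithinAt_of_eqOn_affine
    (nhdsWithin_univ y ▸ Ioo_mem_nhds hy.1 hy.2) hy fun z hz => h z (Ioo_subset_Ioc_self hz)

lemma hasDerivWithinAt_rightDeriv (hf : TropMero f) (x : ℝ) :
    HasDerivWithinAt f (rightDeriv f x) (Ici x) x := by
  obtain ⟨c, hc, -⟩ := hf.exists_hasDerivWithinAt_Ici x
  rwa [hc.rightDeriv_eq]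

lemma hasDerivWithinAt_leftDeriv (hf : TropMero f) (x : ℝ) :
    HasDerivWithinAt f (leftDeriv f x) (Iic x) x := by
  obtain ⟨c, hc, -⟩ := hf.exists_hasDerivWithinAt_Iic x
  rwa [hc.leftDeriv_eq]

lemma eventually_rightDeriv_nhdsGT (hf : TropMero f) (x : ℝ) :
    ∀ᶠ y in 𝓝[>] x, rightDeriv f y = rightDeriv f x := by
  obtain ⟨c, hc, hev⟩ := hf.exists_hasDerivWithinAt_Ici x
  filter_upwards [hev] with y hy
  rw [hc.rightDeriv_eq, hy.hasDerivWithinAt.rightDeriv_eq]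

lemma eventually_rightDeriv_nhdsLT (hf : TropMero f) (x : ℝ) :
    ∀ᶠ y in 𝓝[<] x, rightDeriv f y = leftDeriv f x := by
  obtain ⟨c, hc, hev⟩ := hf.exists_hasDerivWithinAt_Iic x
  filter_upwards [hev] with y hy
  rw [hc.leftDeriv_eq, hy.hasDerivWithinAt.rightDeriv_eq]

lemma omega_neg (hf : TropMero f) (x : ℝ) : omega (fun y => -f y) x = -omega f x := by
  rw [omega_eq_rightDeriv_sub_leftDeriv, omega_eq_rightDeriv_sub_leftDeriv,
    (hf.hasDerivWithinAt_rightDeriv x).fun_neg.rightDeriv_eq,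
    (hf.hasDerivWithinAt_leftDeriv x).fun_neg.leftDeriv_eq]
  ring

lemma omega_eq_zero_mem_codiscrete (hf : TropMero f) : {x | omega f x = 0} ∈ codiscrete ℝ := by
  refine mem_codiscreteWithin_iff_forall_mem_nhdsNE.mpr fun x _ => mem_of_superset ?_
    subset_union_left
  obtain ⟨_, -, hgt⟩ := hf.exists_hasDerivWithinAt_Ici x
  obtain ⟨_, -, hlt⟩ := hf.exists_hasDerivWithinAt_Iic x
  rw [← nhdsLT_sup_nhdsGT]
  exact mem_sup.mpr ⟨hlt.mono fun _ hy => hy.omega_eq_zero, hgt.mono fun _ hy => hy.omega_eq_zero⟩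

lemma finite_inter_support_omega (hf : TropMero f) {K : Set ℝ} (hK : IsCompact K) :
    (K ∩ support (omega f)).Finite :=
  hK.finite_sdiff_of_mem_codiscreteWithin
    (codiscreteWithin_mono (subset_univ K) hf.omega_eq_zero_mem_codiscrete)

lemma finsum_mem_Icc_omega (hf : TropMero f) {u v : ℝ} (huv : u ≤ v) :
    ∑ᶠ s ∈ Icc u v, omega f s = rightDeriv f v - leftDeriv f u := by
  have hfin := hf.finite_inter_support_omega (isCompact_Icc (a := u) (b := v))
  set S := hfin.toFinset
  have hS : ∀ s, s ∈ S ↔ s ∈ Icc u v ∧ omega f s ≠ 0 := fun s => hfin.mem_toFinset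
  rw [← finsum_mem_inter_support, ← hfin.coe_toFinset, finsum_mem_coe_finset]
  -- the jumps of `rightDeriv f` are cancelled by those of the partial sums of `ω_f`
  let g x := rightDeriv f x - ∑ s ∈ S with s ≤ x, omega f s
  have hg : ∀ x ∈ Icc u v, g x = leftDeriv f x - ∑ s ∈ S with s < x, omega f s := by
    intro x hx
    have hjump : ∑ s ∈ S with s ≤ x, omega f s - ∑ s ∈ S with s < x, omega f s = omega f x := by
      rw [Finset.sum_filter, Finset.sum_filter, ← Finset.sum_sub_distrib]
      trans ∑ s ∈ S, if x = s then omega f s else 0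
      · refine Finset.sum_congr rfl fun s _ => ?_
        split_ifs <;> grind
      · rw [Finset.sum_ite_eq]
        split_ifs with hxS
        · rfl
        · by_contra hω
          exact hxS ((hS x).mpr ⟨hx, Ne.symm hω⟩)
    simp only [g, omega_eq_rightDeriv_sub_leftDeriv] at hjump ⊢
    linarith
  have hgt : ∀ x ∈ Icc u v, ∀ᶠ y in 𝓝[>] x, g y = g x := by
    intro x _
    have hS_le : ∀ᶠ y in 𝓝[>] x, ∀ s ∈ S, s ≤ y ↔ s ≤ x := by
      refine (eventually_all_finset S).mpr fun s _ => ?_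
      rcases le_or_gt s x with h | h
      · filter_upwards [self_mem_nhdsWithin] with y hy using iff_of_true (h.trans hy.le) h
      · filter_upwards [nhdsWithin_le_nhds (eventually_lt_nhds h)] with y hy
          using iff_of_false hy.not_ge h.not_ge
    filter_upwards [hf.eventually_rightDeriv_nhdsGT x, hS_le] with y hR hSy
    simp only [g, hR, Finset.filter_congr hSy]
  have hlt : ∀ x ∈ Icc u v, ∀ᶠ y in 𝓝[<] x, g y = g x := by
    intro x hx
    have hS_le : ∀ᶠ y in 𝓝[<] x, ∀ s ∈ S, s ≤ y ↔ s < x := by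
      refine (eventually_all_finset S).mpr fun s _ => ?_
      rcases lt_or_ge s x with h | h
      · filter_upwards [nhdsWithin_le_nhds (eventually_gt_nhds h)] with y hy
          using iff_of_true hy.le h
      · filter_upwards [self_mem_nhdsWithin] with y hy
          using iff_of_false (hy.trans_le h).not_ge h.not_gt
    filter_upwards [hf.eventually_rightDeriv_nhdsLT x, hS_le] with y hR hSy
    rw [hg x hx]
    simp only [g, hR, Finset.filter_congr hSy]
  have hgv : g v = rightDeriv f v - ∑ s ∈ S, omega f s := by
    simp only [g, Finset.filter_true_of_mem fun s hs => ((hS s).mp hs).1.2]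
  have hgu : g u = leftDeriv f u := by
    rw [hg u ⟨le_rfl, huv⟩, Finset.filter_false_of_mem fun s hs => ((hS s).mp hs).1.1.not_gt,
      Finset.sum_empty, sub_zero]
  linarith [eq_of_eventually_eq_nhdsLT_nhdsGT huv hlt hgt]

lemma nCount_neg_eq_finsum_posPart (hf : TropMero f) (t : ℝ) :
    nCount (fun x => -f x) t = ∑ᶠ s ∈ Icc (-t) t, (omega f s)⁺ := by
  simp only [nCount_eq_finsum_negPart, hf.omega_neg, negPart_neg]

lemma finite_inter_support_comp_omega (hf : TropMero f) {φ : ℝ → ℝ} (hφ : φ 0 = 0)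
    (t : ℝ) : (Icc (-t) t ∩ support fun s => φ (omega f s)).Finite :=
  (hf.finite_inter_support_omega isCompact_Icc).subset
    (inter_subset_inter_right _ (support_comp_subset hφ _))

lemma monotone_finsum_mem_Icc (hf : TropMero f) {φ : ℝ → ℝ} (hφ : ∀ x, 0 ≤ φ x)
    (hφ0 : φ 0 = 0) : Monotone fun t => ∑ᶠ s ∈ Icc (-t) t, φ (omega f s) := by
  intro t₁ t₂ ht
  have hfin : ∀ t, HasFiniteSupport ((Icc (-t) t).indicator fun s => φ (omega f s)) :=
    fun t => by
      rw [HasFiniteSupport, support_indicator]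
      exact hf.finite_inter_support_comp_omega hφ0 t
  dsimp only
  rw [finsum_mem_def, finsum_mem_def]
  exact finsum_le_finsum' (hfin _) (hfin _)
    (indicator_le_indicator_of_subset (Icc_subset_Icc (by linarith) ht) fun s => hφ _)

lemma monotone_nCount (hf : TropMero f) : Monotone (nCount f) := by
  simpa only [← nCount_eq_finsum_negPart] using
    hf.monotone_finsum_mem_Icc negPart_nonneg negPart_zero

lemma monotone_nCount_neg (hf : TropMero f) : Monotone (nCount fun x => -f x) := by
  simpa only [← hf.nCount_neg_eq_finsum_posPart] using
    hf.monotone_finsum_mem_Icc posPart_nonneg posPart_zero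

lemma nCount_neg_sub_nCount (hf : TropMero f) {t : ℝ} (ht : 0 ≤ t) :
    nCount (fun x => -f x) t - nCount f t = rightDeriv f t - leftDeriv f (-t) := by
  have hpos : ∀ x : ℝ, x⁺ = x + x⁻ := fun x => eq_add_of_sub_eq (posPart_sub_negPart x)
  rw [hf.nCount_neg_eq_finsum_posPart, nCount_eq_finsum_negPart, ← hf.finsum_mem_Icc_omega
    (by linarith), sub_eq_iff_eq_add, ← finsum_mem_add_distrib'
    (hf.finite_inter_support_omega isCompact_Icc)
    (hf.finite_inter_support_comp_omega (φ := fun x => x⁻) negPart_zero t)]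
  simp only [hpos]

lemma NCount_neg_sub_NCount (hf : TropMero f) {r : ℝ} (hr : 0 ≤ r) :
    NCount (fun x => -f x) r - NCount f r = (f r + f (-r)) / 2 - f 0 := by
  have hint : IntervalIntegrable (nCount f) MeasureTheory.volume 0 r :=
    hf.monotone_nCount.intervalIntegrable
  have hint_neg : IntervalIntegrable (nCount fun x => -f x) MeasureTheory.volume 0 r :=
    hf.monotone_nCount_neg.intervalIntegrable
  have hFTC : ∫ t in (0 : ℝ)..r, (nCount (fun x => -f x) t - nCount f t)
      = (f r + f (-r)) - (f 0 + f (-0)) := by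
    refine intervalIntegral.integral_eq_sub_of_hasDeriv_right_of_le hr
      (hf.1.add (hf.1.comp continuous_neg)).continuousOn (fun t ht => ?_) (hint_neg.sub hint)
    have hreflect : HasDerivWithinAt (fun y => f (-y)) (-leftDeriv f (-t)) (Ioi t) t := by
      simpa only [neg_one_smul, comp_def] using
        (hf.hasDerivWithinAt_leftDeriv (-t)).scomp t (hasDerivWithinAt_neg t (Ioi t))
          fun y (hy : t < y) => neg_le_neg hy.le
    rw [hf.nCount_neg_sub_nCount ht.1.le, sub_eq_add_neg]
    exact ((hf.hasDerivWithinAt_rightDeriv t).mono Ioi_subset_Ici_self).add hreflect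
  rw [NCount, NCount, ← mul_sub, ← intervalIntegral.integral_sub hint_neg hint, hFTC, neg_zero]
  ring

lemma Tchar_eq_Tchar_neg_add (hf : TropMero f) {r : ℝ} (hr : 0 ≤ r) :
    Tchar f r = Tchar (fun x => -f x) r + f 0 := by
  have hm := mProx_sub_mProx_neg f r
  have hN := hf.NCount_neg_sub_NCount hr
  simp only [Tchar]
  linarith

end TropMero

theorem characteristic_le_counting_below_values_general (f : ℝ → ℝ) (a : ℝ)
    (hf : TropMero f) (ha : ∀ x : ℝ, a ≤ f x) :
    (∀ r : ℝ, 0 ≤ r →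
      Tchar f r ≤ NCount (fun x => -(max (f x) a)) r + max (-a) 0 + f 0) ∧
    ∃ K : ℝ, ∀ r : ℝ, 0 ≤ r →
      |Tchar f r - NCount (fun x => -(max (f x) a)) r| ≤ K := by
  have hmax : (fun x => -(max (f x) a)) = fun x => -f x :=
    funext fun x => by rw [max_eq_left (ha x)]
  have hm : ∀ r, mProx (fun x => -f x) r ≤ max (-a) 0 :=
    mProx_le_max fun x => neg_le_neg (ha x)
  have hT : ∀ r, 0 ≤ r → Tchar f r - NCount (fun x => -f x) r = mProx (fun x => -f x) r + f 0 :=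
    fun r hr => by rw [hf.Tchar_eq_Tchar_neg_add hr, Tchar]; ring
  rw [hmax]
  refine ⟨fun r hr => by linarith [hT r hr, hm r], max (-a) 0 + |f 0|, fun r hr => ?_⟩
  calc |Tchar f r - NCount (fun x => -f x) r|
      = |mProx (fun x => -f x) r + f 0| := by rw [hT r hr]
    _ ≤ |mProx (fun x => -f x) r| + |f 0| := abs_add_le _ _
    _ ≤ max (-a) 0 + |f 0| := by rw [abs_of_nonneg (mProx_nonneg _ r)]; linarith [hm r]

/-- Let `f` be a non-constant tropical meromorphic function and `a ∈ ℝ` with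
`a ≤ f(x)` for all `x`. Then `T(r, f) ≤ N(r, 1∘ ⊘ (f ⊕ a)) + max{−a, 0} + f(0)` for
all `r ≥ 0`, and in particular `T(r, f) = N(r, 1∘ ⊘ (f ⊕ a)) + O(1)`:
the difference `T(r, f) − N(r, 1∘ ⊘ (f ⊕ a))` is bounded for `r ≥ 0`. -/
theorem characteristic_le_counting_below_values (f : ℝ → ℝ) (a : ℝ)
    (hf : TropMero f) (hnc : ∃ x y : ℝ, f x ≠ f y) (ha : ∀ x : ℝ, a ≤ f x) :
    (∀ r : ℝ, 0 ≤ r →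
      Tchar f r ≤ NCount (fun x => -(max (f x) a)) r + max (-a) 0 + f 0) ∧
    ∃ K : ℝ, ∀ r : ℝ, 0 ≤ r →
      |Tchar f r - NCount (fun x => -(max (f x) a)) r| ≤ K :=
  characteristic_le_counting_below_values_general f a hf ha
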